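/- If N ~ Poisson(n) with n a positive integer, then E[(n − N)^2 / (min(n, N) + 1)^2] ≤ 282/n. -/

import Mathlib

/-!
Since `1 / (min n N + 1)² ≤ 1 / (n + 1)² + 2 / ((N + 1)(N + 2))`, the expectation is at most
`E[(n - N)²] / (n + 1)² + 2 E[(n - N)² / ((N + 1)(N + 2))]`. The first term is `n / (n + 1)²`.
In the second, `P(N = k) / ((k + 1)(k + 2)) = P(N = k + 2) / n²` turns it into a tail of the
shifted second moment `2 E[(n + 2 - N)²] / n² = 2 (n + 4) / n²`. Both second moments come from
the factorial moments `E[N (N - 1) ⋯ (N - j + 1)] = n ^ j`.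
-/

open Real
open scoped Nat

-- `P(N = k)` for `N ~ Poisson(t)`; the series identities below hold for every real `t`.
noncomputable def poissonWeight (t : ℝ) (k : ℕ) : ℝ := exp (-t) * t ^ k / k !

lemma poissonWeight_nonneg {t : ℝ} (ht : 0 ≤ t) (k : ℕ) : 0 ≤ poissonWeight t k := by
  unfold poissonWeight
  positivity

lemma hasSum_poissonWeight (t : ℝ) : HasSum (poissonWeight t) 1 := by
  convert! (NormedSpace.expSeries_div_hasSum_exp t).mul_left (exp (-t)) using 1
  · ext k
    rw [poissonWeight, mul_div_assoc]
  · simp [← exp_eq_exp_ℝ, ← exp_add]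

lemma poissonWeight_succ_mul (t : ℝ) (k : ℕ) :
    poissonWeight t (k + 1) * (k + 1) = t * poissonWeight t k := by
  simp only [poissonWeight, Nat.factorial_succ, Nat.cast_mul, Nat.cast_succ]
  field_simp
  ring

lemma hasSum_poissonWeight_mul_descFactorial (t : ℝ) (j : ℕ) :
    HasSum (fun k => poissonWeight t k * k.descFactorial j) (t ^ j) := by
  induction j with
  | zero => simpa using hasSum_poissonWeight t
  | succ j ih =>
    have hshift : (fun k => poissonWeight t (k + 1) * ((k + 1).descFactorial (j + 1) : ℝ))
        = fun k => t * (poissonWeight t k * k.descFactorial j) := by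
      ext k
      rw [Nat.succ_descFactorial_succ, Nat.cast_mul, Nat.cast_succ, ← mul_assoc,
        poissonWeight_succ_mul, mul_assoc]
    rw [← hasSum_nat_add_iff' 1, hshift]
    simpa [pow_succ'] using ih.mul_left t

lemma hasSum_poissonWeight_mul_sub_sq (t c : ℝ) :
    HasSum (fun k => poissonWeight t k * (c - k) ^ 2) ((c - t) ^ 2 + t) := by
  have h := (hasSum_poissonWeight_mul_descFactorial t 2).add
    (((hasSum_poissonWeight_mul_descFactorial t 1).mul_left (1 - 2 * c)).add
      ((hasSum_poissonWeight_mul_descFactorial t 0).mul_left (c ^ 2)))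
  convert h using 1
  · ext k
    simp only [Nat.cast_descFactorial_two, Nat.descFactorial_one, Nat.descFactorial_zero,
      Nat.cast_one]
    ring
  · ring

lemma poissonWeight_mul_sq_div (t : ℝ) (k : ℕ) :
    poissonWeight t k * t ^ 2 / ((k + 1) * (k + 2)) = poissonWeight t (k + 2) := by
  have h1 := poissonWeight_succ_mul t k
  have h2 := poissonWeight_succ_mul t (k + 1)
  push_cast at h2
  rw [div_eq_iff (by positivity)]
  linear_combination (-t) * h1 - ((k : ℝ) + 1) * h2

lemma hasSum_poissonWeight_mul_sub_sq_div {t : ℝ} (ht : t ≠ 0) (c : ℝ) :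
    HasSum (fun k => poissonWeight t k * ((c - k) ^ 2 / ((k + 1) * (k + 2))))
      (((c + 2 - t) ^ 2 + t - poissonWeight t 0 * (c + 2) ^ 2 - poissonWeight t 1 * (c + 1) ^ 2)
        / t ^ 2) := by
  have h := ((hasSum_nat_add_iff' 2).mpr (hasSum_poissonWeight_mul_sub_sq t (c + 2))).div_const
    (t ^ 2)
  convert! h using 1
  · ext k
    rw [← poissonWeight_mul_sq_div]
    push_cast
    field_simp
    ring
  · simp [Finset.sum_range_succ]
    ring

lemma one_div_min_add_one_sq_le {t s : ℝ} (ht : 0 ≤ t) (hs : 0 ≤ s) :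
    1 / (min t s + 1) ^ 2 ≤ 1 / (t + 1) ^ 2 + 2 / ((s + 1) * (s + 2)) := by
  have hs' : 1 / (s + 1) ^ 2 ≤ 2 / ((s + 1) * (s + 2)) := by
    rw [div_le_div_iff₀ (by positivity) (by positivity)]
    nlinarith
  rcases le_total t s with h | h
  · rw [min_eq_left h]
    have : 0 ≤ 2 / ((s + 1) * (s + 2)) := by positivity
    linarith
  · rw [min_eq_right h]
    have : 0 ≤ 1 / (t + 1) ^ 2 := by positivity
    linarith

theorem tsum_poissonWeight_mul_sub_sq_div_min_le {t : ℝ} (ht : 0 < t) :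
    ∑' k, poissonWeight t k * ((t - k) ^ 2 / (min t k + 1) ^ 2)
      ≤ t / (t + 1) ^ 2 + 2 * (t + 4) / t ^ 2 := by
  have hA := (hasSum_poissonWeight_mul_sub_sq t t).div_const ((t + 1) ^ 2)
  have hB := (hasSum_poissonWeight_mul_sub_sq_div ht.ne' t).mul_left 2
  have hle : ∀ k : ℕ, poissonWeight t k * ((t - k) ^ 2 / (min t k + 1) ^ 2)
      ≤ poissonWeight t k * (t - k) ^ 2 / (t + 1) ^ 2
        + 2 * (poissonWeight t k * ((t - k) ^ 2 / ((k + 1) * (k + 2)))) := by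
    intro k
    have := poissonWeight_nonneg ht.le k
    calc poissonWeight t k * ((t - k) ^ 2 / (min t k + 1) ^ 2)
        = poissonWeight t k * (t - k) ^ 2 * (1 / (min t k + 1) ^ 2) := by ring
      _ ≤ poissonWeight t k * (t - k) ^ 2 * (1 / (t + 1) ^ 2 + 2 / ((k + 1) * (k + 2))) := by
        gcongr
        exact one_div_min_add_one_sq_le ht.le k.cast_nonneg
      _ = _ := by ring
  have hsum : Summable fun k : ℕ => poissonWeight t k * ((t - k) ^ 2 / (min t k + 1) ^ 2) :=
    (hA.add hB).summable.of_nonneg_of_le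
      (fun k => mul_nonneg (poissonWeight_nonneg ht.le k) (by positivity)) hle
  have hdrop : (t + 2 - t) ^ 2 + t - poissonWeight t 0 * (t + 2) ^ 2
      - poissonWeight t 1 * (t + 1) ^ 2 ≤ t + 4 := by
    nlinarith [mul_nonneg (poissonWeight_nonneg ht.le 0) (sq_nonneg (t + 2)),
      mul_nonneg (poissonWeight_nonneg ht.le 1) (sq_nonneg (t + 1))]
  calc _ ≤ _ := hasSum_le hle hsum.hasSum (hA.add hB)
    _ ≤ t / (t + 1) ^ 2 + 2 * (t + 4) / t ^ 2 := by
      rw [sub_self, zero_pow two_ne_zero, zero_add, mul_div_assoc']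
      gcongr

/-- If `N ~ Poisson(n)` with `n ≥ 1`, then `E[(n − N)²/(min(n, N) + 1)²] ≤ 282/n`. -/
theorem poisson_expectation_second_term (n : ℕ) (hn : 0 < n) :
    ∑' N : ℕ, (Real.exp (-(n : ℝ)) * (n : ℝ) ^ N / N.factorial) *
        (((n : ℝ) - N) ^ 2 / ((min n N : ℕ) + 1 : ℝ) ^ 2)
      ≤ 282 / n := by
  have hx : (1 : ℝ) ≤ n := by exact_mod_cast hn
  push_cast
  calc _ ≤ (n : ℝ) / (n + 1) ^ 2 + 2 * (n + 4) / n ^ 2 :=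
        tsum_poissonWeight_mul_sub_sq_div_min_le (by positivity)
    _ ≤ 282 / n := by
      rw [div_add_div _ _ (by positivity) (by positivity), div_le_div_iff₀ (by positivity)
        (by positivity)]
      nlinarith [sq_nonneg (n : ℝ), sq_nonneg ((n : ℝ) - 1), sq_nonneg ((n : ℝ) + 1)]
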